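/- arXiv:1009.5141 — 4 statements merged into one kernel-verified Lean document; each statement's English description precedes it below -/
import Mathlib

section
/- If a characteristic function ψ is Harris randomly self-decomposable with parameter k, then taking c = 1 shows ψ is Harris infinitely divisible: for each p ∈ (0,1), with a = 1/p, there exists a characteristic function ψ_p such that ψ(t) = ψ_p(t)/(a - (a-1)ψ_p(t)^k)^{1/k}. -/
open MeasureTheory Set

/-- `ψ` is the characteristic function of some probability measure on `ℝ`. -/
def IsCF (ψ : ℝ → ℂ) : Prop :=
  ∃ μ : Measure ℝ, IsProbabilityMeasure μ ∧
    ∀ t : ℝ, ψ t = ∫ x, Complex.exp (Complex.I * t * x) ∂μ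

/-!
Taking `c = 1` gives `ψ = φ · E^{1/k}` with `E = p + (1 - p) ψ^k`, hence `ψ^k = φ^k E`, and
then `E · (a - (a - 1) φ^k) = 1` because `a p = 1`. So the HID denominator is `E⁻¹`, and
`(E⁻¹)^{1/k} = (E^{1/k})⁻¹` as soon as `E` avoids the branch cut `(-∞, 0]`. This holds since
`‖ψ^k‖ ≤ ‖E‖` (as `‖φ‖ ≤ 1`), which is impossible for `E ≤ 0` real.
-/

lemma IsCF.norm_le_one {ψ : ℝ → ℂ} (h : IsCF ψ) (t : ℝ) : ‖ψ t‖ ≤ 1 := by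
  obtain ⟨μ, hμ, hψ⟩ := h
  rw [hψ]
  calc ‖∫ x, Complex.exp (Complex.I * t * x) ∂μ‖
      ≤ ∫ x, ‖Complex.exp (Complex.I * t * x)‖ ∂μ := norm_integral_le_integral_norm _
    _ = 1 := by simp [Complex.norm_exp]

lemma Complex.mem_slitPlane_of_norm_le_norm_convexComb {p : ℝ} (hp₀ : 0 < p) (hp₁ : p < 1)
    {z : ℂ} (hz : ‖z‖ ≤ ‖p + (1 - p) * z‖) : (p + (1 - p) * z : ℂ) ∈ slitPlane := by
  set w : ℂ := p + (1 - p) * z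
  have hw_re : w.re = p + (1 - p) * z.re := by simp [w]
  have hw_im : w.im = (1 - p) * z.im := by simp [w]
  rw [mem_slitPlane_iff]
  by_contra! hw
  have hz_im : z.im = 0 := by
    rw [hw.2] at hw_im
    exact (mul_eq_zero.mp hw_im.symm).resolve_left (by linarith)
  have hz_re : z.re < 0 := by nlinarith
  have hz_norm : -z.re ≤ ‖z‖ := (neg_le_abs z.re).trans (abs_re_le_norm z)
  have hw_norm : ‖w‖ ≤ -w.re := by
    simpa [hw.2, abs_of_nonpos hw.1] using norm_le_abs_re_add_abs_im w
  nlinarith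

lemma harris_denominator_eq_inv {K : Type*} [Field K] {a p u v : K} (hap : a * p = 1)
    (huv : u = v * (p + (1 - p) * u)) : a - (a - 1) * v = (p + (1 - p) * u)⁻¹ := by
  refine eq_inv_of_mul_eq_one_left ?_
  linear_combination (a - 1) * huv + (1 - u) * hap

theorem hrsd_implies_hid_general (k : ℕ) (hk : 0 < k) (ψ : ℝ → ℂ)
    (hHRSD : ∀ c ∈ Ioc (0:ℝ) 1, ∀ p ∈ Ico (0:ℝ) 1,
      ∃ φ : ℝ → ℂ, IsCF φ ∧
        ∀ t : ℝ, ψ t = φ t * ((p : ℂ) + (1 - (p : ℂ)) * (ψ (c * t)) ^ k) ^ ((k : ℂ)⁻¹)) :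
    ∀ p ∈ Ioo (0:ℝ) 1, ∀ a : ℝ, a = 1 / p →
      ∃ ψp : ℝ → ℂ, IsCF ψp ∧
        ∀ t : ℝ, ψ t = ψp t / (((a : ℂ) - ((a : ℂ) - 1) * (ψp t) ^ k) ^ ((k : ℂ)⁻¹)) := by
  rintro p ⟨hp₀, hp₁⟩ a rfl
  obtain ⟨φ, hφ, hψφ⟩ := hHRSD 1 ⟨one_pos, le_rfl⟩ p ⟨hp₀.le, hp₁⟩
  refine ⟨φ, hφ, fun t => ?_⟩
  have ht : ψ t = φ t * ((p : ℂ) + (1 - p) * ψ t ^ k) ^ ((k : ℂ)⁻¹) := by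
    simpa only [one_mul] using hψφ t
  have hpow : ψ t ^ k = φ t ^ k * ((p : ℂ) + (1 - p) * ψ t ^ k) := by
    conv_lhs => rw [ht, mul_pow, Complex.cpow_nat_inv_pow _ hk.ne']
  have hnorm : ‖ψ t ^ k‖ ≤ ‖(p : ℂ) + (1 - p) * ψ t ^ k‖ := by
    conv_lhs => rw [hpow, norm_mul, norm_pow]
    exact mul_le_of_le_one_left (norm_nonneg _) (pow_le_one₀ (norm_nonneg _) (hφ.norm_le_one t))
  have hap : ((1 / p : ℝ) : ℂ) * p = 1 := by
    push_cast
    exact one_div_mul_cancel (by exact_mod_cast hp₀.ne')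
  rw [harris_denominator_eq_inv hap hpow, Complex.inv_cpow _ _ (Complex.slitPlane_arg_ne_pi
    (Complex.mem_slitPlane_of_norm_le_norm_convexComb hp₀ hp₁ hnorm)), div_inv_eq_mul]
  exact ht

/-- HRSD ⇒ HID (take c = 1). -/
theorem hrsd_implies_hid (k : ℕ) (hk : 0 < k) (ψ : ℝ → ℂ) (hψ : IsCF ψ)
    (hHRSD : ∀ c ∈ Ioc (0:ℝ) 1, ∀ p ∈ Ico (0:ℝ) 1,
      ∃ φ : ℝ → ℂ, IsCF φ ∧
        ∀ t : ℝ, ψ t = φ t * ((p : ℂ) + (1 - (p : ℂ)) * (ψ (c * t)) ^ k) ^ ((k : ℂ)⁻¹)) :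
    ∀ p ∈ Ioo (0:ℝ) 1, ∀ a : ℝ, a = 1 / p →
      ∃ ψp : ℝ → ℂ, IsCF ψp ∧
        ∀ t : ℝ, ψ t = ψp t / (((a : ℂ) - ((a : ℂ) - 1) * (ψp t) ^ k) ^ ((k : ℂ)⁻¹)) :=
  hrsd_implies_hid_general k hk ψ hHRSD
end

section
/- The class of HRSD characteristic functions equals the intersection of the classes of SD and HID characteristic functions: a characteristic function ψ is HRSD with parameter k if and only if it is both self-decomposable and Harris infinitely divisible with parameter k. Moreover, when ψ is HRSD, the component CF can be chosen as ψ_{c,p}(t) = ψ_c(t)·ψ_p(ct), where ψ_c(t) = ψ(t)/ψ(ct) and ψ_p(t) = ψ(t)/(p + (1-p)ψ(t)^k)^{1/k}. -/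
/-!
Write `S_p(z) = p + (1-p) z^k` and `E_p(u) = 1/p - (1/p - 1) u^k`. If `z = u / E_p(u)^{1/k}` with
`z ≠ 0`, then `S_p(z) · E_p(u) = 1`. Hence under HID (and likewise under HRSD with `c = 1`)
`S_p(ψ(t))` never vanishes for `p ∈ (0,1)`, which forces `ψ(t)^k` into the slit plane; there
`S_p` stays in the slit plane, `E_p(u)^{1/k} = S_p(z)^{-1/k}`, and the HID relation becomes
`u = ψ_p := ψ / S_p(ψ)^{1/k}`. On the slit plane the principal root is continuous, so
`(ψ^k)^{1/k} / ψ` is a continuous `k`-th root of unity equal to `1` at `0`, i.e. `(ψ^k)^{1/k} = ψ`.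
Thus the HRSD components are `ψ(t)/ψ(ct)` at `p = 0` and `ψ_p` at `c = 1`, and conversely
`ψ(t)/ψ(ct) · ψ_p(ct)` is a product of characteristic functions.
-/

open MeasureTheory Set

/-- `ψ` is Harris randomly self-decomposable with parameter `k`. -/
def IsHRSD (k : ℕ) (ψ : ℝ → ℂ) : Prop :=
  ∀ c ∈ Ioc (0:ℝ) 1, ∀ p ∈ Ico (0:ℝ) 1,
    ∃ φ : ℝ → ℂ, IsCF φ ∧
      ∀ t : ℝ, ψ t = φ t * ((p : ℂ) + (1 - (p : ℂ)) * (ψ (c * t)) ^ k) ^ ((k : ℂ)⁻¹)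

/-- `ψ` is self-decomposable: each ratio ψ(t)/ψ(ct) is a CF. -/
def IsSD (ψ : ℝ → ℂ) : Prop :=
  ∀ c ∈ Ioo (0:ℝ) 1, IsCF (fun t => ψ t / ψ (c * t))

/-- `ψ` is Harris infinitely divisible with parameter `k`. -/
def IsHID (k : ℕ) (ψ : ℝ → ℂ) : Prop :=
  ∀ p ∈ Ioo (0:ℝ) 1,
    ∃ ψp : ℝ → ℂ, IsCF ψp ∧
      ∀ t : ℝ, ψ t = ψp t /
        (((1 / p : ℝ) : ℂ) - (((1 / p : ℝ) : ℂ) - 1) * (ψp t) ^ k) ^ ((k : ℂ)⁻¹)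

open Complex

lemma isCF_iff_exists_charFun {ψ : ℝ → ℂ} :
    IsCF ψ ↔ ∃ μ : Measure ℝ, IsProbabilityMeasure μ ∧ ψ = charFun μ := by
  have hchar (μ : Measure ℝ) (t : ℝ) : charFun μ t = ∫ x, exp (I * t * x) ∂μ := by
    simp only [charFun_apply_real, mul_comm, mul_left_comm]
  simp only [IsCF, funext_iff, hchar]

lemma isCF_one : IsCF fun _ => 1 :=
  isCF_iff_exists_charFun.2 ⟨Measure.dirac 0, inferInstance, by ext t; simp⟩

namespace IsCF

variable {ψ φ : ℝ → ℂ}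

lemma congr (h : IsCF ψ) (he : ∀ t, ψ t = φ t) : IsCF φ :=
  funext he ▸ h

lemma continuous (h : IsCF ψ) : Continuous ψ := by
  obtain ⟨μ, _, rfl⟩ := isCF_iff_exists_charFun.1 h
  exact continuous_charFun

lemma apply_zero (h : IsCF ψ) : ψ 0 = 1 := by
  obtain ⟨μ, _, rfl⟩ := isCF_iff_exists_charFun.1 h
  simp

lemma comp_const_mul (h : IsCF ψ) (c : ℝ) : IsCF fun t => ψ (c * t) := by
  obtain ⟨μ, _, rfl⟩ := isCF_iff_exists_charFun.1 h
  exact isCF_iff_exists_charFun.2 ⟨μ.map (c * ·), Measure.isProbabilityMeasure_map (by fun_prop),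
    funext fun t => (charFun_map_mul c t).symm⟩

lemma mul (hψ : IsCF ψ) (hφ : IsCF φ) : IsCF fun t => ψ t * φ t := by
  obtain ⟨μ, _, rfl⟩ := isCF_iff_exists_charFun.1 hψ
  obtain ⟨ν, _, rfl⟩ := isCF_iff_exists_charFun.1 hφ
  exact isCF_iff_exists_charFun.2 ⟨μ ∗ ν, inferInstance, funext fun t => (charFun_conv t).symm⟩

end IsCF

lemma Continuous.eq_one_of_pow_eq_one {X : Type*} [TopologicalSpace X] [PreconnectedSpace X]
    {k : ℕ} (hk : k ≠ 0) {g : X → ℂ} (hg : Continuous g) (hpow : ∀ x, g x ^ k = 1) {x₀ : X}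
    (h₀ : g x₀ = 1) (x : X) : g x = 1 := by
  have hroots : {z : ℂ | z ^ k = 1}.Finite :=
    (Polynomial.nthRootsFinset k (1 : ℂ)).finite_toSet.subset fun z hz =>
      (Polynomial.mem_nthRootsFinset (Nat.pos_of_ne_zero hk) 1).2 hz
  rw [← h₀]
  exact isPreconnected_univ.constant_of_mapsTo hroots.isDiscrete hg.continuousOn
    (fun x _ => hpow x) trivial trivial

lemma Continuous.cpow_inv_pow_eq_self {X : Type*} [TopologicalSpace X] [PreconnectedSpace X]
    {k : ℕ} (hk : k ≠ 0) {f : X → ℂ} (hf : Continuous f) (hslit : ∀ x, f x ^ k ∈ slitPlane)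
    {x₀ : X} (h₀ : f x₀ = 1) (x : X) : (f x ^ k) ^ (k : ℂ)⁻¹ = f x := by
  have hne (x : X) : f x ≠ 0 := fun h => slitPlane_ne_zero (hslit x) (by simp [h, hk])
  have hroot : Continuous fun x => (f x ^ k) ^ (k : ℂ)⁻¹ / f x :=
    ((hf.pow k).cpow continuous_const hslit).div hf hne
  refine (div_eq_one_iff_eq (hne x)).1 (hroot.eq_one_of_pow_eq_one hk (fun x => ?_) (x₀ := x₀) ?_ x)
  · rw [div_pow, cpow_nat_inv_pow _ hk, div_self (pow_ne_zero k (hne x))]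
  · simp [h₀]

lemma mem_slitPlane_of_forall_add_mul_ne_zero {w : ℂ} (hw : w ≠ 0)
    (h : ∀ p ∈ Ioo (0 : ℝ) 1, (p : ℂ) + (1 - p) * w ≠ 0) : w ∈ slitPlane := by
  by_contra hns
  obtain ⟨hre, him⟩ : w.re ≤ 0 ∧ w.im = 0 := by simpa [mem_slitPlane_iff, not_or] using hns
  set r := w.re
  have hr : r < 0 := hre.lt_of_ne fun h0 => hw (Complex.ext h0 him)
  have hwr : w = r := Complex.ext rfl him
  refine h (-r / (1 - r)) ⟨div_pos (by linarith) (by linarith), ?_⟩ ?_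
  · rw [div_lt_one (by linarith)]
    linarith
  · rw [hwr]
    have : (1 : ℂ) - r ≠ 0 := by exact_mod_cast (show (1 : ℝ) - r ≠ 0 by linarith)
    push_cast
    field_simp
    ring

lemma add_mul_mem_slitPlane {p : ℝ} (hp : p ∈ Icc (0 : ℝ) 1) {w : ℂ} (hw : w ∈ slitPlane) :
    (p : ℂ) + (1 - p) * w ∈ slitPlane := by
  have := starConvex_one_slitPlane hw hp.1 (sub_nonneg.2 hp.2) (add_sub_cancel p 1)
  simpa [real_smul] using this

/-- The paper's `ψ_p`. -/
noncomputable def harrisComponent (k : ℕ) (p : ℝ) (ψ : ℝ → ℂ) (t : ℝ) : ℂ :=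
  ψ t / ((p : ℂ) + (1 - (p : ℂ)) * ψ t ^ k) ^ ((k : ℂ)⁻¹)

section Pointwise

variable {k : ℕ} {p : ℝ} {z u : ℂ}

lemma add_mul_pow_mul_eq_one (hk : k ≠ 0) (hp : p ≠ 0) (hz : z ≠ 0)
    (h : z = u / (((1 / p : ℝ) : ℂ) - (((1 / p : ℝ) : ℂ) - 1) * u ^ k) ^ (k : ℂ)⁻¹) :
    ((p : ℂ) + (1 - p) * z ^ k) * (((1 / p : ℝ) : ℂ) - (((1 / p : ℝ) : ℂ) - 1) * u ^ k) = 1 := by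
  set E := ((1 / p : ℝ) : ℂ) - (((1 / p : ℝ) : ℂ) - 1) * u ^ k
  have hE : E ≠ 0 := by
    rintro hE
    rw [hE, zero_cpow (inv_ne_zero (Nat.cast_ne_zero.2 hk)), div_zero] at h
    exact hz h
  have hzE : z ^ k * E = u ^ k := by
    rw [h, div_pow, cpow_nat_inv_pow _ hk, div_mul_cancel₀ _ hE]
  have hpc : (p : ℂ) ≠ 0 := ofReal_ne_zero.2 hp
  calc ((p : ℂ) + (1 - p) * z ^ k) * E = p * E + (1 - p) * u ^ k := by rw [← hzE]; ring
    _ = 1 := by simp only [E]; push_cast; field_simp; ring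

lemma eq_div_cpow_iff_eq_div_cpow (hk : k ≠ 0) (hp : p ≠ 0) (hz : z ≠ 0)
    (hS : (p : ℂ) + (1 - p) * z ^ k ∈ slitPlane) :
    z = u / (((1 / p : ℝ) : ℂ) - (((1 / p : ℝ) : ℂ) - 1) * u ^ k) ^ (k : ℂ)⁻¹ ↔
      u = z / ((p : ℂ) + (1 - p) * z ^ k) ^ (k : ℂ)⁻¹ := by
  set S := (p : ℂ) + (1 - p) * z ^ k
  have hA : S ^ (k : ℂ)⁻¹ ≠ 0 := cpow_ne_zero_iff.2 (Or.inl (slitPlane_ne_zero hS))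
  have key (hE : ((1 / p : ℝ) : ℂ) - (((1 / p : ℝ) : ℂ) - 1) * u ^ k = S⁻¹) :
      z = u / (((1 / p : ℝ) : ℂ) - (((1 / p : ℝ) : ℂ) - 1) * u ^ k) ^ (k : ℂ)⁻¹ ↔
        u = z / S ^ (k : ℂ)⁻¹ := by
    rw [hE, inv_cpow _ _ (slitPlane_arg_ne_pi hS), div_inv_eq_mul, eq_div_iff hA, eq_comm]
  refine ⟨fun h => (key (eq_inv_of_mul_eq_one_right (add_mul_pow_mul_eq_one hk hp hz h))).1 h,
    fun h => (key ?_).2 h⟩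
  have hpc : (p : ℂ) ≠ 0 := ofReal_ne_zero.2 hp
  have hSne : S ≠ 0 := slitPlane_ne_zero hS
  rw [h, div_pow, cpow_nat_inv_pow _ hk]
  push_cast
  field_simp
  simp only [S]
  ring

end Pointwise

section HarrisClasses

variable {k : ℕ} {ψ : ℝ → ℂ}

lemma IsCF.cpow_inv_pow_eq_self (hψ : IsCF ψ) (hk : k ≠ 0) (hslit : ∀ t, ψ t ^ k ∈ slitPlane)
    (t : ℝ) : (ψ t ^ k) ^ (k : ℂ)⁻¹ = ψ t :=
  hψ.continuous.cpow_inv_pow_eq_self hk hslit hψ.apply_zero t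

lemma IsHRSD.add_mul_pow_ne_zero (hk : k ≠ 0) (hne : ∀ t, ψ t ≠ 0) (h : IsHRSD k ψ) {p : ℝ}
    (hp : p ∈ Ico (0 : ℝ) 1) (t : ℝ) : (p : ℂ) + (1 - p) * ψ t ^ k ≠ 0 := by
  intro h0
  obtain ⟨φ, -, hφ⟩ := h 1 ⟨one_pos, le_rfl⟩ p hp
  have := hφ t
  rw [one_mul, h0, zero_cpow (inv_ne_zero (Nat.cast_ne_zero.2 hk)), mul_zero] at this
  exact hne t this

lemma IsHRSD.pow_mem_slitPlane (hk : k ≠ 0) (hne : ∀ t, ψ t ≠ 0) (h : IsHRSD k ψ) (t : ℝ) :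
    ψ t ^ k ∈ slitPlane :=
  mem_slitPlane_of_forall_add_mul_ne_zero (pow_ne_zero k (hne t)) fun _ hp =>
    h.add_mul_pow_ne_zero hk hne (Ioo_subset_Ico_self hp) t

lemma IsHID.pow_mem_slitPlane (hk : k ≠ 0) (hne : ∀ t, ψ t ≠ 0) (h : IsHID k ψ) (t : ℝ) :
    ψ t ^ k ∈ slitPlane := by
  refine mem_slitPlane_of_forall_add_mul_ne_zero (pow_ne_zero k (hne t)) fun p hp => ?_
  obtain ⟨ψp, -, hψp⟩ := h p hp
  exact left_ne_zero_of_mul_eq_one (add_mul_pow_mul_eq_one hk hp.1.ne' (hne t) (hψp t))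

lemma isHID_iff_forall_isCF_harrisComponent (hk : k ≠ 0) (hne : ∀ t, ψ t ≠ 0)
    (hslit : ∀ t, ψ t ^ k ∈ slitPlane) :
    IsHID k ψ ↔ ∀ p ∈ Ioo (0 : ℝ) 1, IsCF (harrisComponent k p ψ) := by
  have hcomp {p : ℝ} (hp : p ∈ Ioo (0 : ℝ) 1) (t : ℝ) (u : ℂ) := eq_div_cpow_iff_eq_div_cpow
    (u := u) hk hp.1.ne' (hne t) (add_mul_mem_slitPlane (Ioo_subset_Icc_self hp) (hslit t))
  refine ⟨fun h p hp => ?_, fun h p hp => ⟨_, h p hp, fun t => (hcomp hp t _).2 rfl⟩⟩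
  obtain ⟨ψp, hψp, hψψp⟩ := h p hp
  exact hψp.congr fun t => (hcomp hp t _).1 (hψψp t)

lemma IsHID.isCF_harrisComponent (hk : k ≠ 0) (hψ : IsCF ψ) (hne : ∀ t, ψ t ≠ 0)
    (h : IsHID k ψ) {p : ℝ} (hp : p ∈ Ico (0 : ℝ) 1) : IsCF (harrisComponent k p ψ) := by
  have hslit := h.pow_mem_slitPlane hk hne
  rcases hp.1.eq_or_lt with rfl | hp0
  · refine isCF_one.congr fun t => ?_
    rw [harrisComponent, ofReal_zero, sub_zero, one_mul, zero_add,
      hψ.cpow_inv_pow_eq_self hk hslit, div_self (hne t)]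
  · exact (isHID_iff_forall_isCF_harrisComponent hk hne hslit).1 h p ⟨hp0, hp.2⟩

lemma IsHRSD.isSD (hk : k ≠ 0) (hψ : IsCF ψ) (hne : ∀ t, ψ t ≠ 0) (h : IsHRSD k ψ) :
    IsSD ψ := by
  intro c hc
  obtain ⟨φ, hφ, hψφ⟩ := h c (Ioo_subset_Ioc_self hc) 0 ⟨le_rfl, one_pos⟩
  refine hφ.congr fun t => ?_
  have := hψφ t
  rw [ofReal_zero, sub_zero, one_mul, zero_add,
    hψ.cpow_inv_pow_eq_self hk (h.pow_mem_slitPlane hk hne)] at this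
  rw [this, mul_div_cancel_right₀ _ (hne _)]

lemma IsHRSD.isCF_harrisComponent (hk : k ≠ 0) (hne : ∀ t, ψ t ≠ 0) (h : IsHRSD k ψ) {p : ℝ}
    (hp : p ∈ Ico (0 : ℝ) 1) : IsCF (harrisComponent k p ψ) := by
  obtain ⟨φ, hφ, hψφ⟩ := h 1 ⟨one_pos, le_rfl⟩ p hp
  refine hφ.congr fun t => ?_
  have hA : ((p : ℂ) + (1 - p) * ψ t ^ k) ^ (k : ℂ)⁻¹ ≠ 0 :=
    cpow_ne_zero_iff.2 (Or.inl (h.add_mul_pow_ne_zero hk hne hp t))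
  have := hψφ t
  rw [one_mul] at this
  rw [harrisComponent, eq_div_iff hA, ← this]

lemma IsHRSD.isHID (hk : k ≠ 0) (hne : ∀ t, ψ t ≠ 0) (h : IsHRSD k ψ) : IsHID k ψ :=
  (isHID_iff_forall_isCF_harrisComponent hk hne (h.pow_mem_slitPlane hk hne)).2 fun _ hp =>
    h.isCF_harrisComponent hk hne (Ioo_subset_Ico_self hp)

lemma eq_div_mul_harrisComponent_mul {p c t : ℝ} (hne : ψ (c * t) ≠ 0)
    (hS : (p : ℂ) + (1 - p) * ψ (c * t) ^ k ≠ 0) :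
    ψ t = ψ t / ψ (c * t) * harrisComponent k p ψ (c * t) *
      ((p : ℂ) + (1 - p) * ψ (c * t) ^ k) ^ (k : ℂ)⁻¹ := by
  rw [harrisComponent, mul_assoc, div_mul_cancel₀ _ (cpow_ne_zero_iff.2 (Or.inl hS)),
    div_mul_cancel₀ _ hne]

lemma IsSD.isHRSD (hk : k ≠ 0) (hψ : IsCF ψ) (hne : ∀ t, ψ t ≠ 0) (hsd : IsSD ψ)
    (hhid : IsHID k ψ) : IsHRSD k ψ := by
  intro c hc p hp
  have hratio : IsCF fun t => ψ t / ψ (c * t) := by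
    rcases hc.2.eq_or_lt with rfl | hc1
    · exact isCF_one.congr fun t => by rw [one_mul, div_self (hne t)]
    · exact hsd c ⟨hc.1, hc1⟩
  refine ⟨_, hratio.mul ((hhid.isCF_harrisComponent hk hψ hne hp).comp_const_mul c),
    fun t => eq_div_mul_harrisComponent_mul (hne _) (slitPlane_ne_zero ?_)⟩
  exact add_mul_mem_slitPlane (Ico_subset_Icc_self hp) (hhid.pow_mem_slitPlane hk hne _)

end HarrisClasses

/-- Proposition 2.1: C_HRSD = C_SD ∩ C_HID, and the component CF can be chosen as
ψ_{c,p}(t) = ψ_c(t)·ψ_p(ct) with ψ_c(t) = ψ(t)/ψ(ct),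
ψ_p(t) = ψ(t)/(p + (1-p)ψ(t)^k)^{1/k}. -/
theorem hrsd_iff_sd_and_hid (k : ℕ) (hk : 0 < k) (ψ : ℝ → ℂ) (hψ : IsCF ψ)
    (hne : ∀ t, ψ t ≠ 0) :
    (IsHRSD k ψ ↔ IsSD ψ ∧ IsHID k ψ) ∧
    (IsHRSD k ψ →
      ∀ c ∈ Ioc (0:ℝ) 1, ∀ p ∈ Ico (0:ℝ) 1, ∀ t : ℝ,
        ψ t = (ψ t / ψ (c * t)) *
          (ψ (c * t) / ((p : ℂ) + (1 - (p : ℂ)) * (ψ (c * t)) ^ k) ^ ((k : ℂ)⁻¹)) *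
          ((p : ℂ) + (1 - (p : ℂ)) * (ψ (c * t)) ^ k) ^ ((k : ℂ)⁻¹)) := by
  refine ⟨⟨fun h => ⟨h.isSD hk.ne' hψ hne, h.isHID hk.ne' hne⟩,
    fun h => h.1.isHRSD hk.ne' hψ hne h.2⟩, fun h c _ p hp t => ?_⟩
  exact eq_div_mul_harrisComponent_mul (hne _) (h.add_mul_pow_ne_zero hk.ne' hne hp _)
end

section
/- If a probability generating function P is discrete HRSD (for each c ∈ (0,1] and p ∈ [0,1) there is a PGF P_{c,p} with P(s) = P_{c,p}(s)·(p + (1-p)P(1-c+cs)^k)^{1/k}), then P is discrete self-decomposable: for each c ∈ (0,1) the function P(s)/P(1-c+cs) is a PGF. -/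
open Set

/-- `P` is (on `[0,1]`) the probability generating function of a `ℤ₊`-valued
random variable. -/
def IsPGF (P : ℝ → ℝ) : Prop :=
  ∃ q : PMF ℕ, ∀ s ∈ Set.Icc (0:ℝ) 1, P s = ∑' n : ℕ, (q n).toReal * s ^ n

lemma pgf_pos {P : ℝ → ℝ} (hP : IsPGF P) {t : ℝ} (ht : t ∈ Set.Ioc (0:ℝ) 1) :
    0 < P t := by
  obtain ⟨q, hq⟩ := hP
  rw [hq t ⟨ht.1.le, ht.2⟩]
  have hsum : Summable (fun n => (q n).toReal) :=
    ENNReal.summable_toReal (by simp [q.tsum_coe])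
  have hnn : ∀ n : ℕ, 0 ≤ (q n).toReal * t ^ n := by
    intro n
    have := ht.1.le
    positivity
  have hs2 : Summable (fun n => (q n).toReal * t ^ n) := by
    refine Summable.of_nonneg_of_le hnn (fun n => ?_) hsum
    have h1 : t ^ n ≤ 1 := pow_le_one₀ ht.1.le ht.2
    have h0 : (0:ℝ) ≤ (q n).toReal := ENNReal.toReal_nonneg
    calc (q n).toReal * t ^ n ≤ (q n).toReal * 1 := by
          exact mul_le_mul_of_nonneg_left h1 h0
      _ = (q n).toReal := mul_one _
  have htot : ∑' n, (q n).toReal = 1 := by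
    rw [← ENNReal.tsum_toReal_eq (fun n => q.apply_ne_top n), q.tsum_coe,
      ENNReal.toReal_one]
  obtain ⟨n, hn⟩ : ∃ n, 0 < (q n).toReal := by
    by_contra h
    push_neg at h
    have : ∀ n, (q n).toReal = 0 := fun n => le_antisymm (h n) ENNReal.toReal_nonneg
    simp only [this, tsum_zero] at htot
    norm_num at htot
  have hpos : 0 < (q n).toReal * t ^ n := mul_pos hn (pow_pos ht.1 n)
  exact hpos.trans_le (Summable.le_tsum hs2 n (fun m _ => hnn m))

/-- DHRSD ⇒ discrete SD (take p = 0): P(s)/P(1-c+cs) is a PGF. -/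
theorem dhrsd_implies_dsd (k : ℕ) (hk : 0 < k) (P : ℝ → ℝ) (hP : IsPGF P)
    (hDHRSD : ∀ c ∈ Ioc (0:ℝ) 1, ∀ p ∈ Ico (0:ℝ) 1,
      ∃ Q : ℝ → ℝ, IsPGF Q ∧
        ∀ s ∈ Icc (0:ℝ) 1,
          P s = Q s * (p + (1 - p) * (P (1 - c + c * s)) ^ k) ^ ((k : ℝ)⁻¹)) :
    ∀ c ∈ Ioo (0:ℝ) 1, IsPGF (fun s => P s / P (1 - c + c * s)) := by
  intro c hc
  obtain ⟨Q, hQpgf, hQ⟩ := hDHRSD c ⟨hc.1, hc.2.le⟩ 0 ⟨le_rfl, one_pos⟩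
  obtain ⟨q, hq⟩ := hQpgf
  refine ⟨q, fun s hs => ?_⟩
  have ht : 1 - c + c * s ∈ Ioc (0:ℝ) 1 := by
    constructor
    · have : 0 ≤ c * s := mul_nonneg hc.1.le hs.1
      linarith [hc.2]
    · nlinarith [hs.2, hc.1]
  have hPt := pgf_pos hP ht
  have key : ((0:ℝ) + (1 - 0) * (P (1 - c + c * s)) ^ k) ^ ((k : ℝ)⁻¹)
      = P (1 - c + c * s) := by
    rw [zero_add, sub_zero, one_mul, ← Real.rpow_natCast (P _) k,
      ← Real.rpow_mul hPt.le, mul_inv_cancel₀ (Nat.cast_ne_zero.mpr hk.ne'),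
      Real.rpow_one]
  have hPs := hQ s hs
  rw [key] at hPs
  show P s / P (1 - c + c * s) = _
  rw [hPs, mul_div_cancel_right₀ _ hPt.ne']
  exact hq s hs
end

section
/- If a PGF P is discrete HRSD with parameter k, then taking c = 1 shows P is discrete Harris infinitely divisible: for each p ∈ (0,1), with a = 1/p, there exists a PGF P_p such that P(s) = P_p(s)/(a - (a-1)P_p(s)^k)^{1/k}. -/
open Set

lemma isPGF_nonneg {P : ℝ → ℝ} (h : IsPGF P) {s : ℝ} (hs : s ∈ Icc (0:ℝ) 1) :
    0 ≤ P s := by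
  obtain ⟨q, hq⟩ := h
  rw [hq s hs]
  exact tsum_nonneg fun n => mul_nonneg ENNReal.toReal_nonneg (pow_nonneg hs.1 n)

/-- DHRSD ⇒ DHID (take c = 1). -/
theorem dhrsd_implies_dhid (k : ℕ) (hk : 0 < k) (P : ℝ → ℝ) (hP : IsPGF P)
    (hDHRSD : ∀ c ∈ Ioc (0:ℝ) 1, ∀ p ∈ Ico (0:ℝ) 1,
      ∃ Q : ℝ → ℝ, IsPGF Q ∧
        ∀ s ∈ Icc (0:ℝ) 1,
          P s = Q s * (p + (1 - p) * (P (1 - c + c * s)) ^ k) ^ ((k : ℝ)⁻¹)) :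
    ∀ p ∈ Ioo (0:ℝ) 1, ∀ a : ℝ, a = 1 / p →
      ∃ Pp : ℝ → ℝ, IsPGF Pp ∧
        ∀ s ∈ Icc (0:ℝ) 1,
          P s = Pp s / (a - (a - 1) * (Pp s) ^ k) ^ ((k : ℝ)⁻¹) := by
  intro p hp a ha
  obtain ⟨Q, hQpgf, hQ⟩ := hDHRSD 1 ⟨one_pos, le_refl 1⟩ p ⟨hp.1.le, hp.2⟩
  refine ⟨Q, hQpgf, fun s hs => ?_⟩
  have hPs : 0 ≤ P s := isPGF_nonneg hP hs
  have hQs : 0 ≤ Q s := isPGF_nonneg hQpgf hs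
  have heq := hQ s hs
  have hss : (1 : ℝ) - 1 + 1 * s = s := by ring
  rw [hss] at heq
  set X : ℝ := p + (1 - p) * (P s) ^ k with hXdef
  have hXpos : 0 < X := by
    have : 0 ≤ (1 - p) * (P s) ^ k :=
      mul_nonneg (by linarith [hp.2]) (pow_nonneg hPs k)
    have := hp.1
    positivity
  -- P s ^ k = Q s ^ k * X
  have hPk : P s ^ k = Q s ^ k * X := by
    rw [heq, mul_pow, Real.rpow_inv_natCast_pow hXpos.le hk.ne']
  -- X * (1 - (1-p) * Q s ^ k) = p
  have hkey : X * (1 - (1 - p) * Q s ^ k) = p := by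
    have : X = p + (1 - p) * (Q s ^ k * X) := by rw [← hPk]
    linarith [this]
  have hpnz : (p : ℝ) ≠ 0 := hp.1.ne'
  have hden : 1 - (1 - p) * Q s ^ k = p / X := by
    field_simp
    linarith [hkey]
  have hD : a - (a - 1) * Q s ^ k = X⁻¹ := by
    rw [ha]
    field_simp
    nlinarith [hkey]
  rw [hD, heq, Real.inv_rpow hXpos.le]
  field_simp
end
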